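/- arXiv:1511.00446 — 5 statements merged into one kernel-verified Lean document; each statement's English description precedes it below -/
import Mathlib

section
/- Let a, ξ, P_const > 0 with a·P_const/ξ ≥ 1 (wlog the argument of W₀ is ≥ -1/e). Then P* = (1/a)·(exp(1 + W₀((a·P_const/ξ - 1)/e)) - 1) satisfies the stationarity equation a·(ξ·P* + P_const) = ξ·s·log s with s = 1 + a·P*, where W₀ is the principal branch of the Lambert W function. -/
/-!
With `s = 1 + a·P`, the stationarity equation is equivalent to `s·(log s - 1) = a·Pconst/ξ - 1`.
Writing `s = exp (1 + w)` turns the left side into `e·w·eʷ`, so the equation asks exactly for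
`w = W₀((a·Pconst/ξ - 1)/e)`. Since that argument is nonnegative, the intermediate value theorem
gives some `w ≥ 0` with `w·eʷ` equal to it, and then `W₀` of it is `w`.
-/

open Real

lemma exists_nonneg_mul_exp_eq {y : ℝ} (hy : 0 ≤ y) : ∃ w, 0 ≤ w ∧ w * exp w = y := by
  have hcont : ContinuousOn (fun x : ℝ => x * exp x) (Set.Icc 0 y) :=
    (continuous_id.mul continuous_exp).continuousOn
  have hy_mem : y ∈ Set.Icc (0 * exp 0) (y * exp y) :=
    ⟨by simpa using hy, le_mul_of_one_le_right hy (one_le_exp hy)⟩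
  obtain ⟨w, hw, hwy⟩ := intermediate_value_Icc hy hcont hy_mem
  exact ⟨w, hw.1, hwy⟩

lemma exp_one_add_mul_log_sub_one (w : ℝ) :
    exp (1 + w) * (log (exp (1 + w)) - 1) = exp 1 * (w * exp w) := by
  rw [log_exp, exp_add]
  ring

lemma mul_add_eq_mul_log_of_mul_log_sub_one_eq {a ξ Pconst P : ℝ} (hξ : ξ ≠ 0)
    (h : (1 + a * P) * (log (1 + a * P) - 1) = a * Pconst / ξ - 1) :
    a * (ξ * P + Pconst) = ξ * (1 + a * P) * log (1 + a * P) := by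
  have hcancel : ξ * (a * Pconst / ξ) = a * Pconst := mul_div_cancel₀ _ hξ
  linear_combination (-ξ) * h - hcancel

theorem saturation_power_UB_closed_form_general (a ξ Pconst : ℝ)
    (ha : 0 < a) (hξ : 0 < ξ)
    (hcond : a * Pconst / ξ ≥ 1)
    (W0 : ℝ → ℝ) (hW0 : ∀ x : ℝ, -1 ≤ x → W0 (x * Real.exp x) = x) :
    let Pstar : ℝ :=
      (1 / a) * (Real.exp (1 + W0 ((a * Pconst / ξ - 1) / Real.exp 1)) - 1)
    let s : ℝ := 1 + a * Pstar
    a * (ξ * Pstar + Pconst) = ξ * s * Real.log s := by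
  intro Pstar s
  set y := (a * Pconst / ξ - 1) / exp 1 with hy
  obtain ⟨w, hw_nonneg, hwy⟩ := exists_nonneg_mul_exp_eq (y := y)
    (div_nonneg (by linarith) (exp_pos 1).le)
  have hW : W0 y = w := by rw [← hwy]; exact hW0 w (by linarith)
  have hs : s = exp (1 + w) := by
    simp only [s, Pstar]
    rw [← hy, hW]
    field_simp
    ring
  apply mul_add_eq_mul_log_of_mul_log_sub_one_eq hξ.ne'
  change s * (log s - 1) = _
  rw [hs, exp_one_add_mul_log_sub_one, hwy, hy]
  field_simp

/-- The closed-form saturation power for the EE upper bound solves the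
stationarity equation.  `W0` is any function acting as the principal branch of
the Lambert W function, i.e. the inverse of `x ↦ x·exp x` on `[-1, ∞)`. -/
theorem saturation_power_UB_closed_form (a ξ Pconst : ℝ)
    (ha : 0 < a) (hξ : 0 < ξ) (hPc : 0 < Pconst)
    (hcond : a * Pconst / ξ ≥ 1)
    (W0 : ℝ → ℝ) (hW0 : ∀ x : ℝ, -1 ≤ x → W0 (x * Real.exp x) = x) :
    let Pstar : ℝ :=
      (1 / a) * (Real.exp (1 + W0 ((a * Pconst / ξ - 1) / Real.exp 1)) - 1)
    let s : ℝ := 1 + a * Pstar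
    a * (ξ * Pstar + Pconst) = ξ * s * Real.log s :=
  saturation_power_UB_closed_form_general a ξ Pconst ha hξ hcond W0 hW0
end

section
/- Define EE(P) = log(1+P)/(P + P_static) for P > 0 with P_static > 0. Then EE attains its unique maximum over P > 0 at P_EE = exp(W₀((P_static - 1)/e) + 1) - 1. -/
/-!
Substituting `s = log (1 + P)` turns `EE` into `s / (exp s - 1 + P_static)`. If `t > 0` solves
`(t - 1) * exp t = P_static - 1`, which is exactly `t - 1 = W₀((P_static - 1)/e)`, the inequality
`EE ≤ t / (exp t - 1 + P_static)` clears denominators to the tangent-line bound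
`exp t * (1 + s - t) ≤ exp s` of the strictly convex exponential, with equality only at `s = t`.
-/

open Real

lemma exp_mul_one_add_sub_lt_exp {s t : ℝ} (hst : s ≠ t) : exp t * (1 + s - t) < exp s := by
  have hlt : s - t + 1 < exp (s - t) := add_one_lt_exp (sub_ne_zero.mpr hst)
  calc exp t * (1 + s - t) = exp t * (s - t + 1) := by ring
    _ < exp t * exp (s - t) := mul_lt_mul_of_pos_left hlt (exp_pos t)
    _ = exp s := by rw [← exp_add]; ring_nf

lemma exists_pos_sub_one_mul_exp_eq {c : ℝ} (hc : 0 < c) :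
    ∃ t, 0 < t ∧ (t - 1) * exp t = c - 1 := by
  have hcont : ContinuousOn (fun t => (t - 1) * exp t) (Set.Icc 0 (c + 1)) := by fun_prop
  have hmem : c - 1 ∈ Set.Ioo ((0 - 1) * exp 0) ((c + 1 - 1) * exp (c + 1)) := by
    constructor
    · simp only [exp_zero]; linarith
    · nlinarith [add_one_le_exp (c + 1)]
  obtain ⟨t, ht, htc⟩ := intermediate_value_Ioo (by linarith) hcont hmem
  exact ⟨t, ht.1, htc⟩

lemma div_exp_sub_one_add_lt {c s t : ℝ} (ht : 0 < t) (htc : (t - 1) * exp t = c - 1)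
    (hs : 0 < exp s - 1 + c) (hst : s ≠ t) :
    s / (exp s - 1 + c) < t / (exp t - 1 + c) := by
  have hden : exp t - 1 + c = t * exp t := by linarith
  rw [hden, div_lt_div_iff₀ hs (mul_pos ht (exp_pos t))]
  nlinarith [mul_lt_mul_of_pos_left (exp_mul_one_add_sub_lt_exp hst) ht]

/-- The single-link energy efficiency `EE(P) = log(1+P)/(P + P_static)`
attains its unique maximum over `P > 0` at
`P_EE = exp (W₀((P_static - 1)/e) + 1) - 1`. -/
theorem single_link_EE_unique_max (Pstatic : ℝ) (hPs : 0 < Pstatic)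
    (W0 : ℝ → ℝ) (hW0 : ∀ x : ℝ, -1 ≤ x → W0 (x * Real.exp x) = x) :
    let EE : ℝ → ℝ := fun P => Real.log (1 + P) / (P + Pstatic)
    let PEE : ℝ := Real.exp (W0 ((Pstatic - 1) / Real.exp 1) + 1) - 1
    ∀ P : ℝ, 0 < P → EE P ≤ EE PEE ∧ (EE P = EE PEE → P = PEE) := by
  intro EE PEE P hP
  obtain ⟨t, ht, htc⟩ := exists_pos_sub_one_mul_exp_eq hPs
  have hW : W0 ((Pstatic - 1) / exp 1) = t - 1 := by
    have : (Pstatic - 1) / exp 1 = (t - 1) * exp (t - 1) := by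
      rw [exp_sub, ← htc]; ring
    rw [this, hW0 _ (by linarith)]
  have hPEE : PEE = exp t - 1 := by simp only [PEE, hW, sub_add_cancel]
  have hEEPEE : EE PEE = t / (exp t - 1 + Pstatic) := by
    simp only [EE, hPEE, add_sub_cancel, log_exp]
  have hexp : exp (log (1 + P)) = 1 + P := exp_log (by linarith)
  have hEEP : EE P = log (1 + P) / (exp (log (1 + P)) - 1 + Pstatic) := by
    simp only [EE, hexp, add_sub_cancel_left]
  have hlt : log (1 + P) ≠ t → EE P < EE PEE := fun hne => by
    rw [hEEP, hEEPEE]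
    exact div_exp_sub_one_add_lt ht htc (by linarith) hne
  refine ⟨?_, fun heq => ?_⟩
  · by_cases hst : log (1 + P) = t
    · rw [hEEP, hEEPEE, hst]
    · exact (hlt hst).le
  · have hst : log (1 + P) = t := by_contra fun hne => (hlt hne).ne heq
    rw [hPEE, ← hst, hexp]; ring
end

section
/- Define EE(P) = log(1+P)/(P + P_static) with P_static > 0. Then EE is strictly increasing on (0, P_EE) and strictly decreasing on (P_EE, ∞), where P_EE is the unique positive solution of (P + P_static)/(1+P) = log(1+P). -/
/-!
Since `EE = log (1 + P) / (P + P_static)`, its derivative is `g P / (P + P_static)²` with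
`g P = (P + P_static) / (1 + P) - log (1 + P)`. The numerator `g` has derivative
`-(P + P_static) / (1 + P)²`, so it is strictly decreasing on `[0, ∞)`; as it vanishes at
`P_EE`, the derivative of `EE` is positive before `P_EE` and negative after it.
-/

open Real Set

theorem strictMonoOn_Ioo_and_strictAntiOn_Ioi_of_hasDerivAt {f f' : ℝ → ℝ} {a p : ℝ}
    (hap : a ≤ p) (hf : ∀ x, a < x → HasDerivAt f (f' x) x)
    (hpos : ∀ x ∈ Ioo a p, 0 < f' x) (hneg : ∀ x, p < x → f' x < 0) :
    StrictMonoOn f (Ioo a p) ∧ StrictAntiOn f (Ioi p) := by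
  constructor
  · refine strictMonoOn_of_deriv_pos (convex_Ioo a p)
      (fun x hx => (hf x hx.1).continuousAt.continuousWithinAt) fun x hx => ?_
    rw [interior_Ioo] at hx
    rw [(hf x hx.1).deriv]
    exact hpos x hx
  · refine strictAntiOn_of_deriv_neg (convex_Ioi p)
      (fun x hx => (hf x (hap.trans_lt hx)).continuousAt.continuousWithinAt) fun x hx => ?_
    rw [interior_Ioi] at hx
    rw [(hf x (hap.trans_lt hx)).deriv]
    exact hneg x hx

section

variable (c : ℝ)

theorem hasDerivAt_log_one_add {x : ℝ} (hx : 0 < 1 + x) :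
    HasDerivAt (fun P => log (1 + P)) (1 / (1 + x)) x := by
  simpa [one_div] using ((hasDerivAt_id x).const_add 1).log hx.ne'

theorem hasDerivAt_add_div_one_add_sub_log {x : ℝ} (hx : 0 < 1 + x) :
    HasDerivAt (fun P => (P + c) / (1 + P) - log (1 + P)) (-((x + c) / (1 + x) ^ 2)) x := by
  have hquot := ((hasDerivAt_id x).add_const c).div ((hasDerivAt_id x).const_add 1) hx.ne'
  refine (hquot.sub (hasDerivAt_log_one_add hx)).congr_deriv ?_
  simp only [id]
  field_simp
  ring

theorem strictAntiOn_add_div_one_add_sub_log (hc : 0 ≤ c) :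
    StrictAntiOn (fun P => (P + c) / (1 + P) - log (1 + P)) (Ici 0) := by
  refine strictAntiOn_of_deriv_neg (convex_Ici 0) (fun x hx => ?_) fun x hx => ?_
  · have hx1 : 0 < 1 + x := by linarith [mem_Ici.mp hx]
    exact (hasDerivAt_add_div_one_add_sub_log c hx1).continuousAt.continuousWithinAt
  · rw [interior_Ici, mem_Ioi] at hx
    rw [(hasDerivAt_add_div_one_add_sub_log c (by linarith)).deriv, neg_lt_zero]
    have : 0 < x + c := by linarith
    positivity

theorem hasDerivAt_log_one_add_div_add {x : ℝ} (hx : 0 < 1 + x) (hxc : x + c ≠ 0) :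
    HasDerivAt (fun P => log (1 + P) / (P + c))
      (((x + c) / (1 + x) - log (1 + x)) / (x + c) ^ 2) x := by
  refine ((hasDerivAt_log_one_add hx).div ((hasDerivAt_id x).add_const c) hxc).congr_deriv ?_
  simp only [id]
  field_simp

end

theorem single_link_EE_quasiconcave_general (Pstatic : ℝ) (hPs : 0 < Pstatic)
    (PEE : ℝ) (hPEE : 0 < PEE)
    (heq : (PEE + Pstatic) / (1 + PEE) = Real.log (1 + PEE)) :
    let EE : ℝ → ℝ := fun P => Real.log (1 + P) / (P + Pstatic)
    StrictMonoOn EE (Set.Ioo 0 PEE) ∧ StrictAntiOn EE (Set.Ioi PEE) := by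
  intro EE
  set g : ℝ → ℝ := fun P => (P + Pstatic) / (1 + P) - log (1 + P)
  have hg_anti : StrictAntiOn g (Ici 0) := strictAntiOn_add_div_one_add_sub_log Pstatic hPs.le
  have hg_zero : g PEE = 0 := sub_eq_zero.mpr heq
  refine strictMonoOn_Ioo_and_strictAntiOn_Ioi_of_hasDerivAt hPEE.le
    (fun x hx => hasDerivAt_log_one_add_div_add Pstatic (by linarith) (by positivity))
    (fun x hx => ?_) fun x hx => ?_
  · have : 0 < g x := hg_zero ▸ hg_anti hx.1.le hPEE.le hx.2
    exact div_pos this (pow_pos (by linarith [hx.1]) 2)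
  · have : g x < 0 := hg_zero ▸ hg_anti hPEE.le (hPEE.trans hx).le hx
    exact div_neg_of_neg_of_pos this (pow_pos (by linarith) 2)

/-- `EE(P) = log(1+P)/(P + P_static)` is strictly increasing on `(0, P_EE)`
and strictly decreasing on `(P_EE, ∞)`, where `P_EE` is the unique positive
solution of `(P + P_static)/(1+P) = log (1+P)`. -/
theorem single_link_EE_quasiconcave (Pstatic : ℝ) (hPs : 0 < Pstatic)
    (PEE : ℝ) (hPEE : 0 < PEE)
    (heq : (PEE + Pstatic) / (1 + PEE) = Real.log (1 + PEE))
    (huniq : ∀ P : ℝ, 0 < P →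
      (P + Pstatic) / (1 + P) = Real.log (1 + P) → P = PEE) :
    let EE : ℝ → ℝ := fun P => Real.log (1 + P) / (P + Pstatic)
    StrictMonoOn EE (Set.Ioo 0 PEE) ∧ StrictAntiOn EE (Set.Ioi PEE) :=
  single_link_EE_quasiconcave_general Pstatic hPs PEE hPEE heq
end

section
/- For a, ξ, P_const > 0, the function φ(P) = a·(ξ·P + P_const)/(1 + a·P) - ξ·log(1 + a·P) is strictly decreasing on [0, ∞), positive at P = 0, and tends to -∞ as P → ∞; hence η_UB(P) = N·log(1 + a·P)/(ξ·P + P_const) has a unique maximizer on (0, ∞). -/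
/-!
Since `η_UB'(P) = N · φ(P) / (ξ·P + P_const)²`, the sign of `η_UB'` is that of `φ`.
As `φ' = -a²(ξ·P + P_const)/(1 + a·P)² < 0`, `φ(0) = a·P_const > 0` and `φ → -∞`,
the function `φ` has exactly one zero `P*`, and `η_UB` increases on `(0, P*]` and
decreases on `[P*, ∞)`. Below, `η_UB` is `eeBound` and `φ` is `eeBoundCrit`.
-/

open Set Filter

theorem existsUnique_isMaxOn_Ioi_of_strictMonoOn_of_strictAntiOn {α β : Type*} [LinearOrder α]
    [Preorder β] {f : α → β} {a c : α} (hac : a < c) (hmono : StrictMonoOn f (Ioc a c))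
    (hanti : StrictAntiOn f (Ici c)) : ∃! x, x ∈ Ioi a ∧ ∀ y ∈ Ioi a, f y ≤ f x := by
  have hmax : ∀ y ∈ Ioi a, f y ≤ f c := by
    intro y hy
    rcases le_total y c with h | h
    · exact hmono.monotoneOn ⟨hy, h⟩ ⟨hac, le_rfl⟩ h
    · exact hanti.antitoneOn self_mem_Ici h h
  refine ⟨c, ⟨hac, hmax⟩, fun x ⟨hx, hxmax⟩ => ?_⟩
  by_contra hne
  have hlt : f x < f c := by
    rcases lt_or_gt_of_ne hne with h | h
    · exact hmono ⟨hx, h.le⟩ ⟨hac, le_rfl⟩ h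
    · exact hanti self_mem_Ici h.le h
  exact hlt.not_ge (hxmax c hac)

theorem existsUnique_isMaxOn_Ioi_of_hasDerivAt {f f' : ℝ → ℝ} {a c : ℝ} (hac : a < c)
    (hf : ∀ x ∈ Ioi a, HasDerivAt f (f' x) x) (hpos : ∀ x ∈ Ioo a c, 0 < f' x)
    (hneg : ∀ x ∈ Ioi c, f' x < 0) : ∃! x, x ∈ Ioi a ∧ ∀ y ∈ Ioi a, f y ≤ f x := by
  have hcont : ContinuousOn f (Ioi a) := fun x hx => (hf x hx).continuousAt.continuousWithinAt
  apply existsUnique_isMaxOn_Ioi_of_strictMonoOn_of_strictAntiOn hac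
  · refine strictMonoOn_of_hasDerivWithinAt_pos (f' := f') (convex_Ioc a c)
      (hcont.mono Ioc_subset_Ioi_self) (fun x hx => ?_) (fun x hx => ?_)
    all_goals rw [interior_Ioc] at hx
    · exact (hf x hx.1).hasDerivWithinAt
    · exact hpos x hx
  · refine strictAntiOn_of_hasDerivWithinAt_neg (f' := f') (convex_Ici c)
      (hcont.mono (Ici_subset_Ioi.mpr hac)) (fun x hx => ?_) (fun x hx => ?_)
    all_goals rw [interior_Ici] at hx
    · exact (hf x (hac.trans hx)).hasDerivWithinAt
    · exact hneg x hx

theorem exists_mem_Ioi_eq_zero_of_tendsto_atBot {f : ℝ → ℝ} {a : ℝ}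
    (hf : ContinuousOn f (Ici a)) (ha : 0 < f a) (hlim : Tendsto f atTop atBot) :
    ∃ c ∈ Ioi a, f c = 0 := by
  obtain ⟨b, hfb, hab⟩ :=
    ((hlim.eventually (eventually_lt_atBot 0)).and (eventually_ge_atTop a)).exists
  obtain ⟨c, hc, hfc⟩ :=
    intermediate_value_Icc' hab (hf.mono Icc_subset_Ici_self) ⟨hfb.le, ha.le⟩
  exact ⟨c, hc.1.lt_of_ne (by rintro rfl; linarith), hfc⟩

noncomputable def eeBound (N a ξ Pc P : ℝ) : ℝ :=
  N * Real.log (1 + a * P) / (ξ * P + Pc)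

noncomputable def eeBoundCrit (a ξ Pc P : ℝ) : ℝ :=
  a * (ξ * P + Pc) / (1 + a * P) - ξ * Real.log (1 + a * P)

section

variable {a ξ Pc : ℝ}

theorem eeBoundCrit_zero : eeBoundCrit a ξ Pc 0 = a * Pc := by
  simp [eeBoundCrit]

theorem hasDerivAt_eeBoundCrit {P : ℝ} (hP : 1 + a * P ≠ 0) :
    HasDerivAt (eeBoundCrit a ξ Pc) (-(a ^ 2 * (ξ * P + Pc)) / (1 + a * P) ^ 2) P := by
  have hlin : HasDerivAt (fun P : ℝ => 1 + a * P) a P := by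
    simpa using ((hasDerivAt_id P).const_mul a).const_add 1
  have hnum : HasDerivAt (fun P : ℝ => a * (ξ * P + Pc)) (a * ξ) P := by
    simpa using (((hasDerivAt_id P).const_mul ξ).add_const Pc).const_mul a
  have hlog := (Real.hasDerivAt_log hP).comp P hlin
  refine ((hnum.div hlin hP).sub (hlog.const_mul ξ)).congr_deriv ?_
  field_simp
  ring

theorem hasDerivAt_eeBound (N : ℝ) {P : ℝ} (hP : 1 + a * P ≠ 0) (hd : ξ * P + Pc ≠ 0) :
    HasDerivAt (eeBound N a ξ Pc) (N * eeBoundCrit a ξ Pc P / (ξ * P + Pc) ^ 2) P := by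
  have hlin : HasDerivAt (fun P : ℝ => 1 + a * P) a P := by
    simpa using ((hasDerivAt_id P).const_mul a).const_add 1
  have hden : HasDerivAt (fun P : ℝ => ξ * P + Pc) ξ P := by
    simpa using ((hasDerivAt_id P).const_mul ξ).add_const Pc
  have hlog := (Real.hasDerivAt_log hP).comp P hlin
  refine ((hlog.const_mul N).div hden hd).congr_deriv ?_
  simp only [eeBoundCrit, Function.comp_apply]
  field_simp

theorem continuousOn_eeBoundCrit (ha : 0 ≤ a) : ContinuousOn (eeBoundCrit a ξ Pc) (Ici 0) :=
  fun P hP => (hasDerivAt_eeBoundCrit (ξ := ξ) (Pc := Pc)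
    (by nlinarith [mem_Ici.mp hP])).continuousAt.continuousWithinAt

theorem eeBoundCrit_strictAntiOn (ha : 0 < a) (hξ : 0 < ξ) (hPc : 0 ≤ Pc) :
    StrictAntiOn (eeBoundCrit a ξ Pc) (Ici 0) := by
  refine strictAntiOn_of_hasDerivWithinAt_neg
    (f' := fun x => -(a ^ 2 * (ξ * x + Pc)) / (1 + a * x) ^ 2) (convex_Ici 0)
    (continuousOn_eeBoundCrit ha.le) (fun x hx => ?_) (fun x hx => ?_)
  all_goals
    rw [interior_Ici] at hx
    have hlin : 0 < 1 + a * x := add_pos one_pos (mul_pos ha hx)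
  · exact (hasDerivAt_eeBoundCrit hlin.ne').hasDerivWithinAt
  · have hd : 0 < ξ * x + Pc := add_pos_of_pos_of_nonneg (mul_pos hξ hx) hPc
    exact div_neg_of_neg_of_pos (neg_neg_of_pos (mul_pos (pow_pos ha 2) hd)) (pow_pos hlin 2)

theorem tendsto_eeBoundCrit_atTop (ha : 0 < a) (hξ : 0 < ξ) (hPc : 0 ≤ Pc) :
    Tendsto (eeBoundCrit a ξ Pc) atTop atBot := by
  have hlog : Tendsto (fun P => ξ * Real.log (1 + a * P)) atTop atTop :=
    (Real.tendsto_log_atTop.comp (tendsto_atTop_add_const_left _ 1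
      (tendsto_id.const_mul_atTop ha))).const_mul_atTop hξ
  refine tendsto_atBot_mono' atTop ?_ (tendsto_atBot_add_const_left _ (ξ + a * Pc)
    (tendsto_neg_atTop_atBot.comp hlog))
  filter_upwards [eventually_ge_atTop 0] with P hP
  have hfrac : a * (ξ * P + Pc) / (1 + a * P) ≤ ξ + a * Pc := by
    rw [div_le_iff₀ (by positivity)]
    nlinarith [mul_nonneg (mul_nonneg ha.le ha.le) (mul_nonneg hPc hP)]
  simp only [eeBoundCrit, Function.comp_apply]
  linarith

end

open Filter in
/-- `φ(P) = a·(ξ·P + P_const)/(1 + a·P) - ξ·log(1 + a·P)` is strictly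
decreasing on `[0, ∞)`, positive at `0`, tends to `-∞`; hence the EE upper
bound has a unique maximizer on `(0, ∞)`. -/
theorem eta_UB_unique_maximizer (N a ξ Pconst : ℝ)
    (hN : 0 < N) (ha : 0 < a) (hξ : 0 < ξ) (hPc : 0 < Pconst) :
    let φ : ℝ → ℝ := fun P =>
      a * (ξ * P + Pconst) / (1 + a * P) - ξ * Real.log (1 + a * P)
    let ηUB : ℝ → ℝ := fun P => N * Real.log (1 + a * P) / (ξ * P + Pconst)
    StrictAntiOn φ (Set.Ici 0) ∧ 0 < φ 0 ∧ Tendsto φ atTop atBot ∧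
    ∃! Pstar : ℝ, Pstar ∈ Set.Ioi (0 : ℝ) ∧
      ∀ P ∈ Set.Ioi (0 : ℝ), ηUB P ≤ ηUB Pstar := by
  intro φ ηUB
  have hanti : StrictAntiOn φ (Ici 0) := eeBoundCrit_strictAntiOn ha hξ hPc.le
  have hφ0 : 0 < φ 0 := by
    change 0 < eeBoundCrit a ξ Pconst 0
    rw [eeBoundCrit_zero]
    positivity
  have hbot : Tendsto φ atTop atBot := tendsto_eeBoundCrit_atTop ha hξ hPc.le
  obtain ⟨c, hc : 0 < c, hφc⟩ :=
    exists_mem_Ioi_eq_zero_of_tendsto_atBot (continuousOn_eeBoundCrit ha.le) hφ0 hbot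
  have hd : ∀ x ∈ Ioi (0 : ℝ), 0 < ξ * x + Pconst := fun x hx => add_pos (mul_pos hξ hx) hPc
  refine ⟨hanti, hφ0, hbot, existsUnique_isMaxOn_Ioi_of_hasDerivAt hc
    (fun x hx => hasDerivAt_eeBound N (add_pos one_pos (mul_pos ha hx)).ne' (hd x hx).ne')
    (fun x hx => ?_) (fun x hx => ?_)⟩
  · have hφx : 0 < φ x := hφc ▸ hanti hx.1.le hc.le hx.2
    exact div_pos (mul_pos hN hφx) (pow_pos (hd x hx.1) 2)
  · have hφx : φ x < 0 := hφc ▸ hanti hc.le (hc.trans hx).le hx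
    exact div_neg_of_neg_of_pos (mul_neg_of_pos_of_neg hN hφx) (pow_pos (hd x (hc.trans hx)) 2)
end

section
/- With f as above (f(P) = log(1 + m²·P/(Γ·P + A)) - m²·A·(P + P_const/ξ)/(((m²+Γ)·P + A)·(Γ·P + A))), f is monotonically increasing on [0, ∞) and therefore the equation f(P) = 0 has a unique solution P_RZF > 0. -/
/-!
Write `M = ΓP + A` and `N = (m² + Γ)P + A`, so that the logarithm is `log (N / M)` with derivative
`m²A / (NM)`. This cancels the first half of the quotient-rule derivative of the second term, leaving
`f'(P) = m²A (P + P_const/ξ) (N'M + NM') / (NM)² > 0`. Hence `f` is strictly increasing on `[0, ∞)`;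
since `f 0 = -m² P_const / (ξ A) < 0` and `f P → log (1 + m²/Γ) > 0`, the intermediate value
theorem gives a positive root, unique by monotonicity.
-/

open Real Filter Set Topology

theorem StrictMonoOn.existsUnique_eq_zero_of_neg_of_eventually_pos {f : ℝ → ℝ} {a : ℝ}
    (hmono : StrictMonoOn f (Ici a)) (hcont : ContinuousOn f (Ici a)) (ha : f a < 0)
    (hpos : ∀ᶠ x in atTop, 0 < f x) : ∃! x, a < x ∧ f x = 0 := by
  obtain ⟨b, hb, hab⟩ := (hpos.and (eventually_ge_atTop a)).exists
  obtain ⟨x, hx, hfx⟩ := intermediate_value_Ioo hab (hcont.mono Icc_subset_Ici_self) ⟨ha, hb⟩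
  refine ⟨x, ⟨hx.1, hfx⟩, fun y hy => hmono.injOn (mem_Ici.2 hy.1.le) (mem_Ici.2 hx.1.le) ?_⟩
  rw [hy.2, hfx]

theorem tendsto_affine_div_affine_atTop {p q r s : ℝ} (hr : r ≠ 0) :
    Tendsto (fun x => (p * x + q) / (r * x + s)) atTop (𝓝 (p / r)) := by
  have hinv : Tendsto (fun x : ℝ => x⁻¹) atTop (𝓝 0) := tendsto_inv_atTop_zero
  have hlim := ((hinv.const_mul q).const_add p).div ((hinv.const_mul s).const_add r)
    (by simpa using hr)
  simp only [mul_zero, add_zero] at hlim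
  refine hlim.congr' ?_
  filter_upwards [eventually_gt_atTop 0] with x hx
  have hnum : p + q * x⁻¹ = (p * x + q) / x := by field_simp
  have hden : r + s * x⁻¹ = (r * x + s) / x := by field_simp
  rw [Pi.div_apply, hnum, hden, div_div_div_cancel_right₀ hx.ne']

/-- The function `f` of the statement, with `a = m²`, `b = Γ` and `c = P_const / ξ`. -/
noncomputable def rzfChar (a b A c P : ℝ) : ℝ :=
  log (1 + a * P / (b * P + A)) - a * A * (P + c) / (((a + b) * P + A) * (b * P + A))

section
variable {a b A c : ℝ}

theorem hasDerivAt_log_one_add_mul_div {x : ℝ} (hM : 0 < b * x + A) (hN : 0 < (a + b) * x + A) :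
    HasDerivAt (fun P => log (1 + a * P / (b * P + A)))
      (a * A / (((a + b) * x + A) * (b * x + A))) x := by
  have hM' : HasDerivAt (fun P => b * P + A) b x := by
    simpa using ((hasDerivAt_id x).const_mul b).add_const A
  have hq : HasDerivAt (fun P => a * P / (b * P + A)) (a * A / (b * x + A) ^ 2) x :=
    (((hasDerivAt_id' x).const_mul a).div hM' hM.ne').congr_deriv (by ring)
  have hpos : 0 < 1 + a * x / (b * x + A) := by
    rw [one_add_div hM.ne']; exact div_pos (by linarith) hM
  refine ((hq.const_add 1).log hpos.ne').congr_deriv ?_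
  field_simp
  ring

theorem hasDerivAt_rzfChar {x : ℝ} (hM : 0 < b * x + A) (hN : 0 < (a + b) * x + A) :
    HasDerivAt (rzfChar a b A c)
      (a * A * (x + c) * ((a + b) * (b * x + A) + ((a + b) * x + A) * b) /
        (((a + b) * x + A) * (b * x + A)) ^ 2) x := by
  have hM' : HasDerivAt (fun P => b * P + A) b x := by
    simpa using ((hasDerivAt_id x).const_mul b).add_const A
  have hN' : HasDerivAt (fun P => (a + b) * P + A) (a + b) x := by
    simpa using ((hasDerivAt_id x).const_mul (a + b)).add_const A
  have hnum : HasDerivAt (fun P => a * A * (P + c)) (a * A) x := by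
    simpa using ((hasDerivAt_id x).add_const c).const_mul (a * A)
  have hquot : HasDerivAt (fun P => a * A * (P + c) / (((a + b) * P + A) * (b * P + A)))
      ((a * A * (((a + b) * x + A) * (b * x + A)) -
          a * A * (x + c) * ((a + b) * (b * x + A) + ((a + b) * x + A) * b)) /
        (((a + b) * x + A) * (b * x + A)) ^ 2) x :=
    hnum.div (hN'.mul hM') (mul_pos hN hM).ne'
  refine ((hasDerivAt_log_one_add_mul_div hM hN).sub hquot).congr_deriv ?_
  field_simp
  ring

theorem rzfChar_zero (hA : A ≠ 0) : rzfChar a b A c 0 = -(a * c / A) := by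
  simp only [rzfChar, mul_zero, zero_div, add_zero, zero_add, log_one]
  field_simp
  ring

theorem tendsto_rzfChar_atTop (ha : 0 < a) (hb : 0 < b) :
    Tendsto (rzfChar a b A c) atTop (𝓝 (log (1 + a / b))) := by
  have hlog : Tendsto (fun P => log (1 + a * P / (b * P + A))) atTop (𝓝 (log (1 + a / b))) := by
    have hratio := tendsto_affine_div_affine_atTop (p := a) (q := 0) (s := A) hb.ne'
    simp only [add_zero] at hratio
    exact (hratio.const_add 1).log (by positivity)
  have hquot : Tendsto (fun P => a * A * (P + c) / (((a + b) * P + A) * (b * P + A))) atTop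
      (𝓝 0) := by
    have h1 := tendsto_affine_div_affine_atTop (p := 1) (q := c) (s := A) (by positivity : a + b ≠ 0)
    have h2 := tendsto_affine_div_affine_atTop (p := 0) (q := 1) (s := A) hb.ne'
    have hprod := (h1.const_mul (a * A)).mul h2
    rw [zero_div, mul_zero] at hprod
    refine hprod.congr fun P => ?_
    rw [mul_assoc, div_mul_div_comm]
    ring
  rw [← sub_zero (log (1 + a / b))]
  exact hlog.sub hquot

theorem continuousOn_rzfChar (ha : 0 ≤ a) (hb : 0 ≤ b) (hA : 0 < A) :
    ContinuousOn (rzfChar a b A c) (Ici 0) := fun x (hx : 0 ≤ x) =>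
  (hasDerivAt_rzfChar (c := c) (by positivity) (by positivity)).continuousAt.continuousWithinAt

theorem strictMonoOn_rzfChar (ha : 0 < a) (hb : 0 < b) (hA : 0 < A) (hc : 0 < c) :
    StrictMonoOn (rzfChar a b A c) (Ici 0) := by
  refine strictMonoOn_of_deriv_pos (convex_Ici 0) (continuousOn_rzfChar ha.le hb.le hA)
    fun x hx => ?_
  rw [interior_Ici, mem_Ioi] at hx
  rw [(hasDerivAt_rzfChar (c := c) (by positivity) (by positivity)).deriv]
  positivity

end

/-- The RZF characterization function `f` is monotonically increasing on
`[0, ∞)` and `f(P) = 0` has a unique solution `P_RZF > 0`. -/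
theorem rzf_f_monotone_unique_root (A Γ m Pconst ξ : ℝ)
    (hA : 0 < A) (hΓ : 0 < Γ) (hm : 0 < m) (hPc : 0 < Pconst) (hξ : 0 < ξ) :
    let f : ℝ → ℝ := fun P =>
      Real.log (1 + m ^ 2 * P / (Γ * P + A)) -
        m ^ 2 * A * (P + Pconst / ξ) / (((m ^ 2 + Γ) * P + A) * (Γ * P + A))
    StrictMonoOn f (Set.Ici 0) ∧ ∃! P : ℝ, 0 < P ∧ f P = 0 := by
  intro f
  have hm2 : 0 < m ^ 2 := by positivity
  have hc : 0 < Pconst / ξ := div_pos hPc hξ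
  have hmono : StrictMonoOn f (Ici 0) := strictMonoOn_rzfChar hm2 hΓ hA hc
  have hf0 : f 0 < 0 := by
    change rzfChar (m ^ 2) Γ A (Pconst / ξ) 0 < 0
    rw [rzfChar_zero hA.ne', neg_neg_iff_pos]
    positivity
  have hlim : 0 < log (1 + m ^ 2 / Γ) := log_pos (lt_add_of_pos_right 1 (div_pos hm2 hΓ))
  exact ⟨hmono, hmono.existsUnique_eq_zero_of_neg_of_eventually_pos
    (continuousOn_rzfChar hm2.le hΓ.le hA) hf0
    ((tendsto_rzfChar_atTop hm2 hΓ).eventually (eventually_gt_nhds hlim))⟩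
end
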